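/- (Theorem 1, Fisher consistency of the ε-hinge loss.) Fix ε ≥ 0. Under Assumption 1, f* minimizes the ε-hinge risk among all feasible discriminant functions: for every measurable feasible f : 𝒳 → ℝ, one has R_H(f*, ε) ≤ R_H(f, ε), where R_H(f, ε) = E[max(0, 1 + ε − Y f(X))]. -/

import Mathlib

open MeasureTheory ProbabilityTheory
open scoped ENNReal

/-!
Lagrangian relaxation of the two coverage constraints. Penalize the events `{Y = 1, f(X) < -ε}`
and `{Y = -1, f(X) > ε}` with the multipliers `b = (1 - 2 t1) / t1` and `a = (2 tm - 1) / (1 - tm)`.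
Conditionally on `η(X) = h`, the penalized hinge loss is minimized by the value of `f*`, so
`R_H(f*) + penalty(f*) ≤ R_H(f) + penalty(f)` for every `f`. The thresholds make both
constraints active for `f*`, so feasibility of `f` gives `penalty(f) ≤ penalty(f*) < ∞`, and the
penalties cancel.
-/

lemma Real.measurable_sign : Measurable Real.sign := by
  unfold Real.sign
  exact Measurable.ite (measurableSet_lt measurable_id measurable_const) measurable_const
    (Measurable.ite (measurableSet_lt measurable_const measurable_id) measurable_const
      measurable_const)

noncomputable def penalizedHingeLoss (ε a b y v : ℝ) : ℝ :=
  max 0 (1 + ε - y * v) + if y * v < -ε then (if y = 1 then b else a) else 0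

/-- Expected penalized loss of the score `v` at a point where `P(Y = 1 | X) = h`. -/
noncomputable def conditionalCost (ε a b h v : ℝ) : ℝ :=
  h * penalizedHingeLoss ε a b 1 v + (1 - h) * penalizedHingeLoss ε a b (-1) v

lemma conditionalCost_eq (ε a b h v : ℝ) :
    conditionalCost ε a b h v = h * (max 0 (1 + ε - v) + if v < -ε then b else 0)
      + (1 - h) * (max 0 (1 + ε + v) + if ε < v then a else 0) := by
  norm_num [conditionalCost, penalizedHingeLoss, sub_eq_add_neg]

namespace conditionalCost
variable {ε a b h : ℝ}

lemma of_abs_le {v : ℝ} (hv : |v| ≤ ε) :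
    conditionalCost ε a b h v = 1 + ε + (1 - 2 * h) * v := by
  rw [abs_le] at hv
  rw [conditionalCost_eq, max_eq_right (by linarith), max_eq_right (by linarith),
    if_neg (by linarith), if_neg (by linarith)]
  ring

lemma one_add (hε : 0 ≤ ε) :
    conditionalCost ε a b h (1 + ε) = (1 - h) * (2 * (1 + ε) + a) := by
  rw [conditionalCost_eq, max_eq_left (by linarith), max_eq_right (by linarith),
    if_neg (by linarith), if_pos (by linarith)]
  ring

lemma symm (v : ℝ) : conditionalCost ε a b h v = conditionalCost ε b a (1 - h) (-v) := by
  simp only [conditionalCost_eq, sub_sub_cancel, neg_lt_neg_iff, lt_neg, sub_neg_eq_add,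
    ← sub_eq_add_neg]
  ring

lemma affine_le (hh0 : 0 ≤ h) (hh1 : h ≤ 1) (v : ℝ) :
    1 + ε + (1 - 2 * h) * v + (if v < -ε then h * b else 0) + (if ε < v then (1 - h) * a else 0)
      ≤ conditionalCost ε a b h v := by
  have h1 := mul_le_mul_of_nonneg_left (le_max_right 0 (1 + ε - v)) hh0
  have h2 := mul_le_mul_of_nonneg_left (le_max_right 0 (1 + ε + v)) (sub_nonneg.2 hh1)
  rw [conditionalCost_eq]
  split_ifs <;> linarith

lemma neg_one_part_le (hh0 : 0 ≤ h) (hh1 : h ≤ 1) (hb : 0 ≤ b) (v : ℝ) :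
    (1 - h) * (1 + ε + v + if ε < v then a else 0) ≤ conditionalCost ε a b h v := by
  have h1 := mul_nonneg hh0 (le_max_left 0 (1 + ε - v))
  have h2 := mul_le_mul_of_nonneg_left (le_max_right 0 (1 + ε + v)) (sub_nonneg.2 hh1)
  rw [conditionalCost_eq]
  split_ifs <;> nlinarith

lemma one_part_le (hh0 : 0 ≤ h) (hh1 : h ≤ 1) (ha : 0 ≤ a) (v : ℝ) :
    h * (1 + ε - v + if v < -ε then b else 0) ≤ conditionalCost ε a b h v := by
  have h1 := mul_le_mul_of_nonneg_left (le_max_right 0 (1 + ε - v)) hh0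
  have h2 := mul_nonneg (sub_nonneg.2 hh1) (le_max_left 0 (1 + ε + v))
  rw [conditionalCost_eq]
  split_ifs <;> nlinarith

lemma one_add_le (hε : 0 ≤ ε) (hh0 : 0 ≤ h) (hh1 : h ≤ 1) (ha : 0 ≤ a) (hb : 0 ≤ b)
    (hA : a * (1 - h) ≤ 2 * h - 1) (v : ℝ) :
    conditionalCost ε a b h (1 + ε) ≤ conditionalCost ε a b h v := by
  rw [one_add hε]
  have hlin := affine_le (ε := ε) (a := a) (b := b) hh0 hh1 v
  have hneg := neg_one_part_le (a := a) (ε := ε) hh0 hh1 hb v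
  have hh : 0 ≤ 2 * h - 1 := by nlinarith
  rcases le_or_gt v ε with hv | hv
  · rw [if_neg (show ¬ ε < v by linarith)] at hlin
    split_ifs at hlin <;> nlinarith [mul_nonneg hh (sub_nonneg.2 hv), mul_nonneg hh0 hb]
  rcases le_or_gt v (1 + ε) with hv' | hv'
  · rw [if_pos hv, if_neg (show ¬ v < -ε by linarith)] at hlin
    nlinarith [mul_nonneg hh (sub_nonneg.2 hv')]
  · rw [if_pos hv] at hneg
    nlinarith

lemma one_add_sub_abs_mul_le (hε : 0 ≤ ε) (hh0 : 0 ≤ h) (hh1 : h ≤ 1) (ha : 0 ≤ a) (hb : 0 ≤ b)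
    (hA : 2 * h - 1 ≤ a * (1 - h)) (hB : 1 - 2 * h ≤ b * h) (v : ℝ) :
    1 + ε - |1 - 2 * h| * ε ≤ conditionalCost ε a b h v := by
  have hlin := affine_le (ε := ε) (a := a) (b := b) hh0 hh1 v
  have hneg := neg_one_part_le (a := a) (ε := ε) hh0 hh1 hb v
  have hpos := one_part_le (b := b) (ε := ε) hh0 hh1 ha v
  -- whichever penalty is active, one of the three lower bounds suffices
  rcases abs_cases (1 - 2 * h) with ⟨hs, _⟩ | ⟨hs, _⟩ <;> rw [hs] <;>
  split_ifs at hlin hneg hpos <;> nlinarith [mul_nonneg hε hh0]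

lemma neg_one_sub_le (hε : 0 ≤ ε) (hh0 : 0 ≤ h) (hh1 : h ≤ 1) (ha : 0 ≤ a) (hb : 0 ≤ b)
    (hB : b * h ≤ 1 - 2 * h) (v : ℝ) :
    conditionalCost ε a b h (-(1 + ε)) ≤ conditionalCost ε a b h v := by
  rw [symm, symm v, neg_neg]
  exact one_add_le hε (by linarith) (by linarith) hb ha (by rw [sub_sub_cancel]; linarith) (-v)

end conditionalCost

@[fun_prop]
lemma measurable_penalizedHingeLoss (ε a b y : ℝ) : Measurable (penalizedHingeLoss ε a b y) :=
  (measurable_const.max (measurable_const.sub (measurable_const.mul measurable_id))).add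
    (Measurable.ite (measurableSet_lt (measurable_const.mul measurable_id) measurable_const)
      measurable_const measurable_const)

lemma penalizedHingeLoss_nonneg {ε a b : ℝ} (ha : 0 ≤ a) (hb : 0 ≤ b) (y v : ℝ) :
    0 ≤ penalizedHingeLoss ε a b y v := by
  unfold penalizedHingeLoss
  have := le_max_left 0 (1 + ε - y * v)
  split_ifs <;> linarith

lemma ofReal_conditionalCost {ε a b h : ℝ} (hh0 : 0 ≤ h) (hh1 : h ≤ 1) (ha : 0 ≤ a) (hb : 0 ≤ b)
    (v : ℝ) :
    ENNReal.ofReal (conditionalCost ε a b h v) =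
      ENNReal.ofReal h * ENNReal.ofReal (penalizedHingeLoss ε a b 1 v)
        + ENNReal.ofReal (1 - h) * ENNReal.ofReal (penalizedHingeLoss ε a b (-1) v) := by
  have h₁ := penalizedHingeLoss_nonneg (ε := ε) ha hb 1 v
  have hm := penalizedHingeLoss_nonneg (ε := ε) ha hb (-1) v
  rw [conditionalCost, ENNReal.ofReal_add (mul_nonneg hh0 h₁) (mul_nonneg (by linarith) hm),
    ENNReal.ofReal_mul hh0, ENNReal.ofReal_mul (by linarith)]

noncomputable def thresholdRule (ε t1 tm h : ℝ) : ℝ :=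
  if tm < h then 1 + ε else if t1 ≤ h then ε * Real.sign (h - 1 / 2) else -(1 + ε)

lemma abs_mul_sign_le {ε : ℝ} (hε : 0 ≤ ε) (r : ℝ) : |ε * Real.sign r| ≤ ε := by
  rcases Real.sign_apply_eq r with h | h | h <;> simp [h, abs_of_nonneg hε, hε]

namespace thresholdRule
variable {ε t1 tm h : ℝ}

lemma lt_neg_iff (hε : 0 ≤ ε) (ht : t1 ≤ tm) : thresholdRule ε t1 tm h < -ε ↔ h < t1 := by
  have := neg_abs_le (ε * Real.sign (h - 1 / 2))
  have := abs_mul_sign_le hε (h - 1 / 2)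
  unfold thresholdRule
  split_ifs <;> constructor <;> intro <;> linarith

lemma lt_iff (hε : 0 ≤ ε) (ht : t1 ≤ tm) : ε < thresholdRule ε t1 tm h ↔ tm < h := by
  have := le_abs_self (ε * Real.sign (h - 1 / 2))
  have := abs_mul_sign_le hε (h - 1 / 2)
  unfold thresholdRule
  split_ifs <;> constructor <;> intro <;> linarith

@[fun_prop]
lemma measurable : Measurable (thresholdRule ε t1 tm) :=
  Measurable.ite (measurableSet_lt measurable_const measurable_id) measurable_const
    (Measurable.ite (measurableSet_le measurable_const measurable_id)
      ((Real.measurable_sign.comp (measurable_id.sub_const _)).const_mul ε) measurable_const)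

lemma inter_setOf_mul_lt_neg_of_one {Ω : Type*} (hε : 0 ≤ ε) (ht : t1 ≤ tm) (Y Z : Ω → ℝ) :
    {ω | Y ω = 1} ∩ {ω | Y ω * thresholdRule ε t1 tm (Z ω) < -ε}
      = {ω | Y ω = 1} ∩ {ω | Z ω < t1} :=
  Set.ext fun ω => and_congr_right fun (hy : Y ω = 1) => by
    rw [Set.mem_ofPred_eq, hy, one_mul, lt_neg_iff hε ht]
    rfl

lemma inter_setOf_mul_lt_neg_of_neg_one {Ω : Type*} (hε : 0 ≤ ε) (ht : t1 ≤ tm) (Y Z : Ω → ℝ) :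
    {ω | Y ω = -1} ∩ {ω | Y ω * thresholdRule ε t1 tm (Z ω) < -ε}
      = {ω | Y ω = -1} ∩ {ω | tm < Z ω} :=
  Set.ext fun ω => and_congr_right fun (hy : Y ω = -1) => by
    rw [Set.mem_ofPred_eq, hy, neg_one_mul, neg_lt_neg_iff, lt_iff hε ht]
    rfl

end thresholdRule

open conditionalCost in
lemma conditionalCost_thresholdRule_le {ε t1 tm h : ℝ} (hε : 0 ≤ ε) (hh0 : 0 ≤ h) (hh1 : h ≤ 1)
    (ht1 : 0 < t1) (ht1h : t1 ≤ 1 / 2) (htm : 1 / 2 ≤ tm) (htm1 : tm < 1) (v : ℝ) :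
    conditionalCost ε ((2 * tm - 1) / (1 - tm)) ((1 - 2 * t1) / t1) h (thresholdRule ε t1 tm h)
      ≤ conditionalCost ε ((2 * tm - 1) / (1 - tm)) ((1 - 2 * t1) / t1) h v := by
  set a := (2 * tm - 1) / (1 - tm)
  set b := (1 - 2 * t1) / t1
  have ha : 0 ≤ a := div_nonneg (by linarith) (by linarith)
  have hb : 0 ≤ b := div_nonneg (by linarith) (by linarith)
  -- the multipliers make the rule indifferent between adjacent branches exactly at the thresholds
  have hA : a * (1 - h) - (2 * h - 1) = (a + 2) * (tm - h) := by
    linear_combination div_mul_cancel₀ (2 * tm - 1) (by linarith : 1 - tm ≠ 0)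
  have hB : b * h - (1 - 2 * h) = (b + 2) * (h - t1) := by
    linear_combination div_mul_cancel₀ (1 - 2 * t1) ht1.ne'
  unfold thresholdRule
  split_ifs with htop hmid
  · exact one_add_le hε hh0 hh1 ha hb (by nlinarith) v
  · rw [of_abs_le (abs_mul_sign_le hε _)]
    refine le_trans ?_ (one_add_sub_abs_mul_le hε hh0 hh1 ha hb (by nlinarith) (by nlinarith) v)
    rcases lt_trichotomy h (1 / 2) with hlt | rfl | hgt
    · rw [Real.sign_of_neg (by linarith), abs_of_pos (by linarith)]
      linarith
    · norm_num
    · rw [Real.sign_of_pos (by linarith), abs_of_neg (by linarith)]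
      linarith
  · exact neg_one_sub_le hε hh0 hh1 ha hb (by nlinarith) v

section Regression

variable {𝒳 Ω : Type*} [MeasurableSpace 𝒳] [MeasurableSpace Ω] {P : Measure Ω} {X : Ω → 𝒳}
  {Y : Ω → ℝ} {η : 𝒳 → ℝ}

def IsRegressionFunction (P : Measure Ω) (X : Ω → 𝒳) (Y : Ω → ℝ) (η : 𝒳 → ℝ) : Prop :=
  ∀ A : Set 𝒳, MeasurableSet A →
    P {ω | X ω ∈ A ∧ Y ω = 1} = ∫⁻ x in A, ENNReal.ofReal (η x) ∂(P.map X)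

lemma map_restrict_eq_withDensity (hX : Measurable X)
    (hreg : IsRegressionFunction P X Y η) :
    (P.restrict {ω | Y ω = 1}).map X = (P.map X).withDensity fun x => ENNReal.ofReal (η x) := by
  ext A hA
  rw [Measure.map_apply hX hA, Measure.restrict_apply (hX hA), withDensity_apply _ hA]
  exact hreg A hA

lemma map_restrict_compl_eq_withDensity [IsFiniteMeasure P] (hX : Measurable X)
    (hY : Measurable Y) (hη : Measurable η) (hη01 : ∀ x, η x ∈ Set.Icc (0 : ℝ) 1)
    (hreg : IsRegressionFunction P X Y η) :
    (P.restrict {ω | Y ω = 1}ᶜ).map X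
      = (P.map X).withDensity fun x => ENNReal.ofReal (1 - η x) := by
  have hS : MeasurableSet {ω | Y ω = 1} := hY (measurableSet_singleton 1)
  have hsplit : (P.restrict {ω | Y ω = 1}ᶜ).map X + (P.restrict {ω | Y ω = 1}).map X
      = P.map X := by
    rw [← Measure.map_add _ _ hX, add_comm, Measure.restrict_add_restrict_compl hS]
  have hdens : (P.map X).withDensity (fun x => ENNReal.ofReal (1 - η x))
      + (P.restrict {ω | Y ω = 1}).map X = P.map X := by
    have hone : (fun x => ENNReal.ofReal (1 - η x)) + (fun x => ENNReal.ofReal (η x)) = 1 :=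
      funext fun x => by
        rw [Pi.add_apply, ← ENNReal.ofReal_add (by linarith [(hη01 x).2]) (hη01 x).1,
          sub_add_cancel, ENNReal.ofReal_one, Pi.one_apply]
    rw [map_restrict_eq_withDensity hX hreg, ← withDensity_add_left (by fun_prop), hone,
      withDensity_one]
  calc (P.restrict {ω | Y ω = 1}ᶜ).map X
      = (P.restrict {ω | Y ω = 1}ᶜ).map X + (P.restrict {ω | Y ω = 1}).map X
        - (P.restrict {ω | Y ω = 1}).map X := Measure.add_sub_cancel.symm
    _ = (P.map X).withDensity (fun x => ENNReal.ofReal (1 - η x))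
        + (P.restrict {ω | Y ω = 1}).map X - (P.restrict {ω | Y ω = 1}).map X := by
      rw [hsplit, hdens]
    _ = _ := Measure.add_sub_cancel

lemma lintegral_comp_eq_lintegral_regression [IsFiniteMeasure P] (hX : Measurable X)
    (hY : Measurable Y) (hYval : ∀ ω, Y ω = 1 ∨ Y ω = -1)
    (hη : Measurable η) (hη01 : ∀ x, η x ∈ Set.Icc (0 : ℝ) 1)
    (hreg : IsRegressionFunction P X Y η)
    (G : ℝ → 𝒳 → ℝ≥0∞) (hG₁ : Measurable (G 1)) (hG₂ : Measurable (G (-1))) :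
    ∫⁻ ω, G (Y ω) (X ω) ∂P
      = ∫⁻ x, ENNReal.ofReal (η x) * G 1 x + ENNReal.ofReal (1 - η x) * G (-1) x ∂(P.map X) := by
  have hS := hY (measurableSet_singleton 1)
  rw [← lintegral_add_compl _ hS, lintegral_add_left (by fun_prop)]
  congr 1
  · calc ∫⁻ ω in {ω | Y ω = 1}, G (Y ω) (X ω) ∂P
        = ∫⁻ ω in {ω | Y ω = 1}, G 1 (X ω) ∂P :=
          setLIntegral_congr_fun hS fun ω (hω : Y ω = 1) => by rw [hω]
      _ = _ := by
          rw [← lintegral_map hG₁ hX, map_restrict_eq_withDensity hX hreg,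
            lintegral_withDensity_eq_lintegral_mul _ (by fun_prop) hG₁]
          rfl
  · calc ∫⁻ ω in {ω | Y ω = 1}ᶜ, G (Y ω) (X ω) ∂P
        = ∫⁻ ω in {ω | Y ω = 1}ᶜ, G (-1) (X ω) ∂P :=
          setLIntegral_congr_fun hS.compl fun ω (hω : Y ω ≠ 1) => by
            rw [(hYval ω).resolve_left hω]
      _ = _ := by
          rw [← lintegral_map hG₂ hX, map_restrict_compl_eq_withDensity hX hY hη hη01 hreg,
            lintegral_withDensity_eq_lintegral_mul _ (by fun_prop) hG₂]
          rfl

lemma lintegral_penalizedHingeLoss (hX : Measurable X) (hY : Measurable Y)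
    (hYval : ∀ ω, Y ω = 1 ∨ Y ω = -1) {g : 𝒳 → ℝ} (hg : Measurable g) {ε a b : ℝ}
    (ha : 0 ≤ a) (hb : 0 ≤ b) :
    ∫⁻ ω, ENNReal.ofReal (penalizedHingeLoss ε a b (Y ω) (g (X ω))) ∂P
      = ∫⁻ ω, ENNReal.ofReal (max 0 (1 + ε - Y ω * g (X ω))) ∂P
        + ENNReal.ofReal b * P ({ω | Y ω = 1} ∩ {ω | Y ω * g (X ω) < -ε})
        + ENNReal.ofReal a * P ({ω | Y ω = -1} ∩ {ω | Y ω * g (X ω) < -ε}) := by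
  have hE : MeasurableSet {ω | Y ω * g (X ω) < -ε} :=
    measurableSet_lt (hY.mul (hg.comp hX)) measurable_const
  have h₁ : MeasurableSet {ω | Y ω = 1} := hY (measurableSet_singleton 1)
  have hm : MeasurableSet {ω | Y ω = -1} := hY (measurableSet_singleton (-1))
  have hpen : ∀ ω, ENNReal.ofReal (penalizedHingeLoss ε a b (Y ω) (g (X ω)))
      = ENNReal.ofReal (max 0 (1 + ε - Y ω * g (X ω)))
        + (({ω | Y ω = 1} ∩ {ω | Y ω * g (X ω) < -ε}).indicator (fun _ => ENNReal.ofReal b) ω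
          + ({ω | Y ω = -1} ∩ {ω | Y ω * g (X ω) < -ε}).indicator
              (fun _ => ENNReal.ofReal a) ω) := by
    intro ω
    rw [penalizedHingeLoss, ENNReal.ofReal_add (le_max_left _ _) (by split_ifs <;> linarith)]
    congr 1
    simp only [Set.indicator_apply, Set.mem_inter_iff, Set.mem_ofPred_eq]
    by_cases hω : Y ω * g (X ω) < -ε
    · simp only [hω, and_true, if_true]
      rcases hYval ω with hy | hy <;> norm_num [hy]
    · simp [hω]
  simp_rw [hpen]
  rw [lintegral_add_left (by fun_prop),
    lintegral_add_left (measurable_const.indicator (h₁.inter hE)),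
    lintegral_indicator_const (h₁.inter hE), lintegral_indicator_const (hm.inter hE), add_assoc]

lemma lintegral_penalizedHingeLoss_le_of_conditionalCost_le [IsFiniteMeasure P]
    (hX : Measurable X) (hY : Measurable Y) (hYval : ∀ ω, Y ω = 1 ∨ Y ω = -1)
    (hη : Measurable η) (hη01 : ∀ x, η x ∈ Set.Icc (0 : ℝ) 1)
    (hreg : IsRegressionFunction P X Y η)
    {ε a b : ℝ} (ha : 0 ≤ a) (hb : 0 ≤ b) {g₁ g₂ : 𝒳 → ℝ} (hg₁ : Measurable g₁)
    (hg₂ : Measurable g₂)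
    (hle : ∀ x, conditionalCost ε a b (η x) (g₁ x) ≤ conditionalCost ε a b (η x) (g₂ x)) :
    ∫⁻ ω, ENNReal.ofReal (penalizedHingeLoss ε a b (Y ω) (g₁ (X ω))) ∂P
      ≤ ∫⁻ ω, ENNReal.ofReal (penalizedHingeLoss ε a b (Y ω) (g₂ (X ω))) ∂P := by
  rw [lintegral_comp_eq_lintegral_regression hX hY hYval hη hη01 hreg
      (fun y x => ENNReal.ofReal (penalizedHingeLoss ε a b y (g₁ x))) (by fun_prop) (by fun_prop),
    lintegral_comp_eq_lintegral_regression hX hY hYval hη hη01 hreg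
      (fun y x => ENNReal.ofReal (penalizedHingeLoss ε a b y (g₂ x))) (by fun_prop) (by fun_prop)]
  refine lintegral_mono fun x => ?_
  rw [← ofReal_conditionalCost (hη01 x).1 (hη01 x).2 ha hb,
    ← ofReal_conditionalCost (hη01 x).1 (hη01 x).2 ha hb]
  exact ENNReal.ofReal_le_ofReal (hle x)

end Regression

theorem fstar_minimizes_hinge_risk_general
    {𝒳 : Type*} [MeasurableSpace 𝒳]
    {Ω : Type*} [MeasurableSpace Ω] (P : Measure Ω) [IsProbabilityMeasure P]
    (X : Ω → 𝒳) (Y : Ω → ℝ) (hX : Measurable X) (hY : Measurable Y)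
    (hYval : ∀ ω, Y ω = 1 ∨ Y ω = -1)
    -- η is a measurable version of the regression function x ↦ P(Y = 1 ∣ X = x)
    (η : 𝒳 → ℝ) (hη : Measurable η) (hη01 : ∀ x, η x ∈ Set.Icc (0 : ℝ) 1)
    (hreg : ∀ A : Set 𝒳, MeasurableSet A →
      P {ω | X ω ∈ A ∧ Y ω = 1} = ∫⁻ x in A, ENNReal.ofReal (η x) ∂(P.map X))
    -- noncoverage levels and thresholds
    (αm α1 : ℝ) (hαm : αm ∈ Set.Ioo (0 : ℝ) 1) (hα1 : α1 ∈ Set.Ioo (0 : ℝ) 1)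
    (tm t1 : ℝ)
    (htm : P[|{ω | Y ω = -1}] {ω | tm < η (X ω)} = ENNReal.ofReal αm)
    (ht1 : P[|{ω | Y ω = 1}] {ω | η (X ω) < t1} = ENNReal.ofReal α1)
    -- Assumption 1: the distribution of η(X) is atomless under both class-conditional
    -- distributions, and t1 ≤ 1/2 ≤ tm
    (ht1half : t1 ≤ 1 / 2) (hhalftm : 1 / 2 ≤ tm)
    (ε : ℝ) (hε : 0 ≤ ε)
    -- the Bayes-type rule f*
    (fstar : 𝒳 → ℝ)
    (hfstar : ∀ x, fstar x =
      if tm < η x then 1 + ε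
      else if t1 ≤ η x then ε * Real.sign (η x - 1 / 2)
      else -(1 + ε))
    -- an arbitrary measurable feasible competitor f
    (f : 𝒳 → ℝ) (hf : Measurable f)
    (hfeasm : P[|{ω | Y ω = -1}] {ω | Y ω * f (X ω) < -ε} ≤ ENNReal.ofReal αm)
    (hfeas1 : P[|{ω | Y ω = 1}] {ω | Y ω * f (X ω) < -ε} ≤ ENNReal.ofReal α1) :
    ∫⁻ ω, ENNReal.ofReal (max 0 (1 + ε - Y ω * fstar (X ω))) ∂P
    ≤ ∫⁻ ω, ENNReal.ofReal (max 0 (1 + ε - Y ω * f (X ω))) ∂P := by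
  obtain rfl : fstar = fun x => thresholdRule ε t1 tm (η x) := funext hfstar
  have htm1 : tm < 1 := by
    obtain ⟨ω, hω⟩ := nonempty_of_measure_ne_zero (htm ▸ (ENNReal.ofReal_pos.2 hαm.1).ne')
    exact hω.trans_le (hη01 _).2
  have ht10 : 0 < t1 := by
    obtain ⟨ω, hω⟩ := nonempty_of_measure_ne_zero (ht1 ▸ (ENNReal.ofReal_pos.2 hα1.1).ne')
    exact (hη01 _).1.trans_lt hω
  have ha : 0 ≤ (2 * tm - 1) / (1 - tm) := div_nonneg (by linarith) (by linarith)
  have hb : 0 ≤ (1 - 2 * t1) / t1 := div_nonneg (by linarith) (by linarith)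
  have hlag := lintegral_penalizedHingeLoss_le_of_conditionalCost_le hX hY hYval hη hη01 hreg
    ha hb (by fun_prop) hf fun x => conditionalCost_thresholdRule_le hε (hη01 x).1 (hη01 x).2
      ht10 ht1half hhalftm htm1 (f x)
  have h₁ : MeasurableSet {ω | Y ω = 1} := hY (measurableSet_singleton 1)
  have hm : MeasurableSet {ω | Y ω = -1} := hY (measurableSet_singleton (-1))
  rw [lintegral_penalizedHingeLoss hX hY hYval (g := fun x => thresholdRule ε t1 tm (η x))
      (by fun_prop) ha hb,
    lintegral_penalizedHingeLoss hX hY hYval hf ha hb,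
    thresholdRule.inter_setOf_mul_lt_neg_of_one hε (by linarith) Y (fun ω => η (X ω)),
    thresholdRule.inter_setOf_mul_lt_neg_of_neg_one hε (by linarith) Y (fun ω => η (X ω))] at hlag
  simp only [← cond_mul_eq_inter h₁, ← cond_mul_eq_inter hm, ht1, htm, add_assoc] at hlag
  refine (ENNReal.add_le_add_iff_right (by finiteness)).1 (hlag.trans ?_)
  gcongr

/-- Theorem 1, Fisher consistency of the ε-hinge loss: Under Assumption 1, `f*` minimizes the ε-hinge risk `R_H(f, ε) = E[max(0, 1 + ε − Y f(X))]` among all measurable feasible discriminant functions. -/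
theorem fstar_minimizes_hinge_risk
    {𝒳 : Type*} [MeasurableSpace 𝒳]
    {Ω : Type*} [MeasurableSpace Ω] (P : Measure Ω) [IsProbabilityMeasure P]
    (X : Ω → 𝒳) (Y : Ω → ℝ) (hX : Measurable X) (hY : Measurable Y)
    (hYval : ∀ ω, Y ω = 1 ∨ Y ω = -1)
    (hpos1 : 0 < P {ω | Y ω = 1}) (hposm : 0 < P {ω | Y ω = -1})
    -- η is a measurable version of the regression function x ↦ P(Y = 1 ∣ X = x)
    (η : 𝒳 → ℝ) (hη : Measurable η) (hη01 : ∀ x, η x ∈ Set.Icc (0 : ℝ) 1)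
    (hreg : ∀ A : Set 𝒳, MeasurableSet A →
      P {ω | X ω ∈ A ∧ Y ω = 1} = ∫⁻ x in A, ENNReal.ofReal (η x) ∂(P.map X))
    -- noncoverage levels and thresholds
    (αm α1 : ℝ) (hαm : αm ∈ Set.Ioo (0 : ℝ) 1) (hα1 : α1 ∈ Set.Ioo (0 : ℝ) 1)
    (tm t1 : ℝ)
    (htm : P[|{ω | Y ω = -1}] {ω | tm < η (X ω)} = ENNReal.ofReal αm)
    (ht1 : P[|{ω | Y ω = 1}] {ω | η (X ω) < t1} = ENNReal.ofReal α1)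
    -- Assumption 1: the distribution of η(X) is atomless under both class-conditional
    -- distributions, and t1 ≤ 1/2 ≤ tm
    (hatomlessm : ∀ t : ℝ, P[|{ω | Y ω = -1}] {ω | η (X ω) = t} = 0)
    (hatomless1 : ∀ t : ℝ, P[|{ω | Y ω = 1}] {ω | η (X ω) = t} = 0)
    (ht1half : t1 ≤ 1 / 2) (hhalftm : 1 / 2 ≤ tm)
    (ε : ℝ) (hε : 0 ≤ ε)
    -- the Bayes-type rule f*
    (fstar : 𝒳 → ℝ)
    (hfstar : ∀ x, fstar x =
      if tm < η x then 1 + ε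
      else if t1 ≤ η x then ε * Real.sign (η x - 1 / 2)
      else -(1 + ε))
    -- an arbitrary measurable feasible competitor f
    (f : 𝒳 → ℝ) (hf : Measurable f)
    (hfeasm : P[|{ω | Y ω = -1}] {ω | Y ω * f (X ω) < -ε} ≤ ENNReal.ofReal αm)
    (hfeas1 : P[|{ω | Y ω = 1}] {ω | Y ω * f (X ω) < -ε} ≤ ENNReal.ofReal α1) :
    ∫⁻ ω, ENNReal.ofReal (max 0 (1 + ε - Y ω * fstar (X ω))) ∂P
    ≤ ∫⁻ ω, ENNReal.ofReal (max 0 (1 + ε - Y ω * f (X ω))) ∂P :=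
  fstar_minimizes_hinge_risk_general P X Y hX hY hYval η hη hη01 hreg αm α1 hαm hα1 tm t1 htm ht1
    ht1half hhalftm ε hε fstar hfstar f hf hfeasm hfeas1
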